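/- Let C(ℝ⁺) be the space of continuous real-valued functions on (0,+∞) with the compact-open topology, and let E_K be the equivalence relation on C(ℝ⁺) defined by f E_K g iff lim_{t→+∞}(f(t)−g(t)) = 0. Then E_K is Borel bireducible with ℝ^ℕ/c₀, and E([0,1],0) is Borel bireducible with ℝ^ℕ/c₀. -/

import Mathlib

open Filter Topology MeasureTheory
open scoped ENNReal NNReal

noncomputable section

/-- `E` is Borel reducible to `F`: there is a Borel (measurable) map `θ` such that
`E x y ↔ F (θ x) (θ y)` for all `x, y`. -/
def BorelReducible {α β : Type*} [MeasurableSpace α] [MeasurableSpace β]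
    (E : α → α → Prop) (F : β → β → Prop) : Prop :=
  ∃ θ : α → β, Measurable θ ∧ ∀ x y, E x y ↔ F (θ x) (θ y)

/-- Borel bireducibility: reductions in both directions. -/
def BorelBireducible {α β : Type*} [MeasurableSpace α] [MeasurableSpace β]
    (E : α → α → Prop) (F : β → β → Prop) : Prop :=
  BorelReducible E F ∧ BorelReducible F E

noncomputable instance : MeasurableSpace C(Set.Ioi (0:ℝ), ℝ) := borel _
instance : BorelSpace C(Set.Ioi (0:ℝ), ℝ) := ⟨rfl⟩

/-!
Interpolating a sequence piecewise linearly through the points `(n + 1, x n)` reduces `ℝ^ℕ/c₀`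
to `E_K`. Conversely, cutting `f` into its restrictions to the windows `[n + 1, n + 2]` turns
`E_K` into termwise convergence of sequences in the separable space `C([0,1], ℝ)`.

For any separable metric space `X` with dense sequence `d`, termwise convergence in `X^ℕ` reduces
to `E([0,1], 0)` through Aharoni-type bumps: for a radius `r`, the distance to the complement of
`B(d i, r)` with the `r/4`-balls around the earlier `d m` removed, capped at `r`. These are
1-Lipschitz, only finitely many of them are nonzero at a given point, and any two points `2r`
apart are separated by `r/4` by one of them. Taking `X = ℝ` gives `ℝ^ℕ/c₀ ≤ E([0,1], 0)`; the
inclusion `[0,1] ⊆ ℝ` gives the converse.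
-/

open Metric Set TopologicalSpace

theorem BorelReducible.trans {α β γ : Type*} [MeasurableSpace α] [MeasurableSpace β]
    [MeasurableSpace γ] {E : α → α → Prop} {F : β → β → Prop} {G : γ → γ → Prop}
    (hEF : BorelReducible E F) (hFG : BorelReducible F G) : BorelReducible E G := by
  obtain ⟨θ, hθ, hEθ⟩ := hEF
  obtain ⟨η, hη, hFη⟩ := hFG
  exact ⟨η ∘ θ, hη.comp hθ, fun x y => (hEθ x y).trans (hFη _ _)⟩

theorem tendsto_cofinite_zero_iff_finite {α E : Type*} [SeminormedAddCommGroup E] {f : α → E} :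
    Tendsto f cofinite (𝓝 0) ↔ ∀ ε > 0, {a | ε ≤ ‖f a‖}.Finite := by
  simp only [Metric.tendsto_nhds, eventually_cofinite, dist_zero_right, not_lt]

theorem Equiv.tendsto_comp_cofinite_iff {α β γ : Type*} (e : α ≃ β) {f : β → γ}
    {l : Filter γ} : Tendsto (f ∘ e) cofinite l ↔ Tendsto f cofinite l :=
  ⟨fun h => by simpa [Function.comp_def] using h.comp e.symm.injective.tendsto_cofinite,
    fun h => h.comp e.injective.tendsto_cofinite⟩

theorem tendsto_dist_iff_tendsto_sub_of_separating {α ι X : Type*} [PseudoMetricSpace X]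
    {φ : ι → X → ℝ} (hlip : ∀ i, LipschitzWith 1 (φ i))
    (hfin : ∀ a, ∀ γ > 0, {i | γ ≤ |φ i a|}.Finite)
    (hsep : ∀ ε > 0, ∃ δ > 0, ∀ a b, ε ≤ dist a b → ∃ i, δ ≤ |φ i a - φ i b|)
    (u v : α → X) :
    Tendsto (fun n => dist (u n) (v n)) cofinite (𝓝 0) ↔
      Tendsto (fun p : α × ι => φ p.2 (u p.1) - φ p.2 (v p.1)) cofinite (𝓝 0) := by
  simp only [tendsto_cofinite_zero_iff_finite, Real.norm_eq_abs, abs_dist]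
  constructor
  · intro h ε hε
    have hS := h ε hε
    refine (hS.prod (hS.biUnion fun n _ =>
      (hfin (u n) _ (half_pos hε)).union (hfin (v n) _ (half_pos hε)))).subset ?_
    rintro ⟨n, i⟩ (hp : ε ≤ |φ i (u n) - φ i (v n)|)
    have hn : ε ≤ dist (u n) (v n) := by
      simpa [Real.dist_eq] using hp.trans ((hlip i).dist_le_mul (u n) (v n))
    have hi : ε / 2 ≤ |φ i (u n)| ∨ ε / 2 ≤ |φ i (v n)| := by
      by_contra! h'
      linarith [abs_sub (φ i (u n)) (φ i (v n))]
    exact ⟨hn, mem_biUnion hn hi⟩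
  · intro h ε hε
    obtain ⟨δ, hδ, hsepδ⟩ := hsep ε hε
    refine ((h δ hδ).image Prod.fst).subset fun n hn => ?_
    obtain ⟨i, hi⟩ := hsepδ _ _ hn
    exact ⟨(n, i), hi, rfl⟩

section HollowBall

variable {X : Type*} [PseudoMetricSpace X] (d : ℕ → X) (r : ℝ)

def hollowBall (i : ℕ) : Set X := ball (d i) r \ ⋃ m < i, closedBall (d m) (r / 4)

def bump (i : ℕ) (a : X) : ℝ := min r (infDist a (hollowBall d r i)ᶜ)

theorem lipschitzWith_bump (i : ℕ) : LipschitzWith 1 (bump d r i) :=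
  lipschitz_infDist_pt _ |>.const_min r

theorem bump_nonneg {r : ℝ} (hr : 0 ≤ r) (i : ℕ) (a : X) : 0 ≤ bump d r i a :=
  le_min hr infDist_nonneg

theorem bump_le (i : ℕ) (a : X) : bump d r i a ≤ r := min_le_left _ _

variable {d r}

theorem bump_eq_zero (hr : 0 ≤ r) {i : ℕ} {a : X} (ha : a ∉ hollowBall d r i) :
    bump d r i a = 0 := by
  rw [bump, infDist_zero_of_mem ha, min_eq_right hr]

theorem finite_setOf_bump_pos (hd : DenseRange d) (hr : 0 < r) (a : X) :
    {i | 0 < bump d r i a}.Finite := by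
  obtain ⟨n, hn⟩ := Metric.denseRange_iff.1 hd a (r / 4) (by positivity)
  refine (finite_le_nat n).subset fun i (hi : 0 < bump d r i a) => ?_
  by_contra! hni
  refine hi.ne' (bump_eq_zero hr.le fun ha => ha.2 ?_)
  exact mem_iUnion₂.2 ⟨n, not_le.1 hni, mem_closedBall.2 hn.le⟩

/-- Take the first `d n` within `r / 2` of `a`: then `b` lies outside `hollowBall d r n`, while
`a` keeps distance `r / 4` from its complement. -/
theorem exists_le_bump_sub (hd : DenseRange d) (hr : 0 < r) {a b : X}
    (hab : 2 * r ≤ dist a b) : ∃ i, r / 4 ≤ bump d r i a - bump d r i b := by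
  classical
  have hex : ∃ n, dist a (d n) < r / 2 := Metric.denseRange_iff.1 hd a _ (half_pos hr)
  set n := Nat.find hex
  have hn : dist a (d n) < r / 2 := Nat.find_spec hex
  have hfar : ∀ m < n, r / 2 ≤ dist a (d m) := fun m hm => not_lt.1 (Nat.find_min hex hm)
  have hb : b ∉ hollowBall d r n := fun hb => by
    linarith [mem_ball.1 hb.1, dist_triangle_right a b (d n)]
  refine ⟨n, ?_⟩
  rw [bump_eq_zero hr.le hb, sub_zero]
  refine le_min (by linarith) ((le_infDist ⟨b, hb⟩).2 fun z hz => ?_)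
  by_cases hzn : dist z (d n) < r
  · obtain ⟨m, hm, hzm⟩ := mem_iUnion₂.1 (not_not.1 fun h => hz ⟨mem_ball.2 hzn, h⟩)
    linarith [hfar m hm, mem_closedBall.1 hzm, dist_triangle a z (d m)]
  · linarith [dist_triangle_left z (d n) a]

end HollowBall

section BumpFamily

variable {X : Type*} [PseudoMetricSpace X] {d : ℕ → X}

variable (d) in
def bumps (p : ℕ × ℕ) : X → ℝ := bump d (1 / ((p.1 : ℝ) + 1)) p.2

theorem bumps_mem_unitInterval (p : ℕ × ℕ) (a : X) : bumps d p a ∈ Icc (0:ℝ) 1 :=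
  ⟨bump_nonneg d (by positivity) _ a,
    (bump_le d _ _ a).trans (div_le_one_of_le₀ (by simp) (by positivity))⟩

theorem finite_setOf_le_abs_bumps (hd : DenseRange d) (a : X) {γ : ℝ} (hγ : 0 < γ) :
    {p | γ ≤ |bumps d p a|}.Finite := by
  have hK : {k : ℕ | γ ≤ 1 / ((k : ℝ) + 1)}.Finite := by
    have h := tendsto_one_div_add_atTop_nhds_zero_nat (𝕜 := ℝ)
    rw [← Nat.cofinite_eq_atTop, tendsto_cofinite_zero_iff_finite] at h
    have habs (k : ℕ) : |(k : ℝ) + 1| = k + 1 := abs_of_pos (by positivity)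
    simpa [habs] using h γ hγ
  refine (hK.prod (hK.biUnion fun k _ =>
    finite_setOf_bump_pos hd (r := 1 / ((k : ℝ) + 1)) (by positivity) a)).subset ?_
  rintro ⟨k, i⟩ (h : γ ≤ |bump d (1 / (k + 1)) i a|)
  rw [abs_of_nonneg (bump_nonneg d (by positivity) i a)] at h
  have hk : γ ≤ 1 / ((k : ℝ) + 1) := h.trans (bump_le d _ i a)
  exact ⟨hk, mem_biUnion hk (hγ.trans_le h)⟩

theorem exists_le_abs_bumps_sub (hd : DenseRange d) {ε : ℝ} (hε : 0 < ε) :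
    ∃ δ > 0, ∀ a b, ε ≤ dist a b → ∃ p, δ ≤ |bumps d p a - bumps d p b| := by
  obtain ⟨k, hk⟩ := exists_nat_one_div_lt (half_pos hε)
  set r : ℝ := 1 / ((k : ℝ) + 1)
  refine ⟨r / 4, by positivity, fun a b hab => ?_⟩
  obtain ⟨i, hi⟩ := exists_le_bump_sub hd (r := r) (by positivity) (by linarith)
  exact ⟨(k, i), hi.trans (le_abs_self _)⟩

end BumpFamily

theorem borelReducible_tendsto_dist_unitInterval (X : Type*) [PseudoMetricSpace X]
    [SeparableSpace X] [Nonempty X] [MeasurableSpace X] [OpensMeasurableSpace X] :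
    BorelReducible (fun u v : ℕ → X => Tendsto (fun n => dist (u n) (v n)) atTop (𝓝 0))
      (fun x y : ℕ → Icc (0:ℝ) 1 =>
        Tendsto (fun n => |(x n : ℝ) - (y n : ℝ)|) atTop (𝓝 0)) := by
  have hd : DenseRange (denseSeq X) := denseRange_denseSeq X
  let e : ℕ ≃ ℕ × ℕ × ℕ := (Denumerable.eqv _).symm
  refine ⟨fun u j => ⟨bumps (denseSeq X) (e j).2 (u (e j).1), bumps_mem_unitInterval _ _⟩,
    measurable_pi_lambda _ fun j => ((lipschitzWith_bump _ _ _).continuous.measurable.comp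
      (measurable_pi_apply _)).subtype_mk, fun u v => ?_⟩
  beta_reduce
  rw [← Nat.cofinite_eq_atTop, tendsto_dist_iff_tendsto_sub_of_separating
    (φ := bumps (denseSeq X)) (fun p => lipschitzWith_bump _ _ p.2)
    (fun a _ => finite_setOf_le_abs_bumps hd a) (fun _ => exists_le_abs_bumps_sub hd),
    ← e.tendsto_comp_cofinite_iff,
    tendsto_zero_iff_abs_tendsto_zero]
  rfl

def windowEmbedding (n : ℕ) : C(Icc (0:ℝ) 1, Ioi (0:ℝ)) :=
  ⟨fun s => ⟨n + 1 + s, mem_Ioi.2 (by linarith [s.2.1, (n.cast_nonneg : (0:ℝ) ≤ n)])⟩,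
    by fun_prop⟩

def window (n : ℕ) (f : C(Ioi (0:ℝ), ℝ)) : C(Icc (0:ℝ) 1, ℝ) := f.comp (windowEmbedding n)

theorem abs_sub_le_dist_window (f g : C(Ioi (0:ℝ), ℝ)) {m : ℕ} {t : Ioi (0:ℝ)}
    (h₁ : (m : ℝ) + 1 ≤ t) (h₂ : (t : ℝ) ≤ m + 2) :
    |f t - g t| ≤ dist (window m f) (window m g) := by
  let s : Icc (0:ℝ) 1 := ⟨t - (m + 1), by constructor <;> linarith⟩
  have hs : windowEmbedding m s = t := Subtype.ext (by simp [windowEmbedding, s])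
  simpa [window, hs, Real.dist_eq] using ContinuousMap.dist_apply_le_dist (f := window m f)
    (g := window m g) s

theorem tendsto_sub_iff_tendsto_dist_window (f g : C(Ioi (0:ℝ), ℝ)) :
    Tendsto (fun t => f t - g t) atTop (𝓝 0) ↔
      Tendsto (fun n => dist (window n f) (window n g)) atTop (𝓝 0) := by
  constructor
  · intro h
    rw [Metric.tendsto_nhds] at h ⊢
    intro ε hε
    obtain ⟨T, hT⟩ := eventually_atTop.1 (h (ε / 2) (half_pos hε))
    filter_upwards [eventually_ge_atTop ⌈(T : ℝ)⌉₊] with n hn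
    have hwin : dist (window n f) (window n g) ≤ ε / 2 := by
      refine (ContinuousMap.dist_le (half_pos hε).le).2 fun s => ?_
      have hTs : T ≤ windowEmbedding n s := by
        show (T : ℝ) ≤ n + 1 + s
        linarith [Nat.ceil_le.1 hn, s.2.1]
      simpa [Real.dist_eq, window] using (hT _ hTs).le
    rw [dist_zero_right, Real.norm_of_nonneg dist_nonneg]
    linarith
  · intro h
    have hm : Tendsto (fun t : Ioi (0:ℝ) => ⌊(t : ℝ)⌋₊ - 1) atTop atTop :=
      (tendsto_sub_atTop_nat 1).comp
        (tendsto_nat_floor_atTop.comp (tendsto_Ioi_atTop.1 tendsto_id))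
    refine squeeze_zero_norm' ?_ (h.comp hm)
    filter_upwards [eventually_ge_atTop (⟨1, mem_Ioi.2 one_pos⟩ : Ioi (0:ℝ))]
      with t (ht : (1:ℝ) ≤ t)
    have h1 : 1 ≤ ⌊(t : ℝ)⌋₊ := (Nat.one_le_floor_iff _).2 ht
    rw [Real.norm_eq_abs]
    apply abs_sub_le_dist_window <;> rw [Nat.cast_sub h1, Nat.cast_one]
    · linarith [Nat.floor_le (zero_le_one.trans ht)]
    · linarith [Nat.lt_floor_add_one (t : ℝ)]

/-- The piecewise linear function through the points `(n + 1, x n)`: the `k`-th summand ramps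
from `0` to `x (k + 1) - x k` on `[k + 1, k + 2]`. -/
def interpolate (x : ℕ → ℝ) (t : ℝ) : ℝ :=
  x 0 + ∑ k ∈ Finset.range ⌈t⌉₊, (x (k + 1) - x k) * projIcc (0:ℝ) 1 zero_le_one (t - (k + 1))

theorem interpolate_eq_sum (x : ℕ → ℝ) {t : ℝ} {M : ℕ} (hM : t ≤ M) :
    interpolate x t = x 0 +
      ∑ k ∈ Finset.range M, (x (k + 1) - x k) * projIcc (0:ℝ) 1 zero_le_one (t - (k + 1)) := by
  rw [interpolate, Finset.sum_subset (Finset.range_subset_range.2 (Nat.ceil_le.2 hM))]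
  intro k _ hk
  have htk : t ≤ k :=
    (Nat.le_ceil t).trans (by exact_mod_cast not_lt.1 (Finset.mem_range.not.1 hk))
  simp [projIcc_of_le_left zero_le_one (by linarith : t - (k + 1) ≤ 0)]

theorem continuous_interpolate : Continuous fun p : (ℕ → ℝ) × ℝ => interpolate p.1 p.2 := by
  refine continuous_iff_continuousAt.2 fun p => ?_
  have hsum : Continuous fun q : (ℕ → ℝ) × ℝ => q.1 0 + ∑ k ∈ Finset.range (⌈p.2⌉₊ + 1),
      (q.1 (k + 1) - q.1 k) * projIcc (0:ℝ) 1 zero_le_one (q.2 - (k + 1)) := by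
    fun_prop
  refine hsum.continuousAt.congr ?_
  have hp : p.2 < ↑(⌈p.2⌉₊ + 1) := by push_cast; linarith [Nat.le_ceil p.2]
  filter_upwards [(isOpen_lt continuous_snd continuous_const).mem_nhds hp] with q hq
  exact (interpolate_eq_sum q.1 (le_of_lt hq)).symm

theorem interpolate_eq (x : ℕ → ℝ) {m : ℕ} {t : ℝ} (h₁ : (m : ℝ) + 1 ≤ t) (h₂ : t ≤ m + 2) :
    interpolate x t = x m + (t - (m + 1)) * (x (m + 1) - x m) := by
  rw [interpolate_eq_sum x (M := m + 2) (by push_cast; linarith), Finset.sum_range_succ,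
    Finset.sum_range_succ]
  have hfull : ∀ k ∈ Finset.range m,
      (x (k + 1) - x k) * (projIcc (0:ℝ) 1 zero_le_one (t - (k + 1)) : ℝ) = x (k + 1) - x k := by
    intro k hk
    have hkm : (k : ℝ) + 1 ≤ m := by exact_mod_cast Finset.mem_range.1 hk
    simp [projIcc_of_right_le zero_le_one (by linarith : 1 ≤ t - (k + 1))]
  rw [Finset.sum_congr rfl hfull, Finset.sum_range_sub,
    projIcc_of_mem zero_le_one
      (by constructor <;> linarith : t - ((m : ℕ) + 1) ∈ Icc (0:ℝ) 1),
    projIcc_of_le_left zero_le_one (by push_cast; linarith : t - ((m + 1 : ℕ) + 1) ≤ 0)]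
  push_cast
  ring

def interpolateMap (x : ℕ → ℝ) : C(Ioi (0:ℝ), ℝ) :=
  ⟨fun t => interpolate x t,
    continuous_interpolate.comp (continuous_const.prodMk continuous_subtype_val)⟩

theorem continuous_interpolateMap : Continuous interpolateMap :=
  ContinuousMap.continuous_of_continuous_uncurry _ <|
    continuous_interpolate.comp (continuous_fst.prodMk (continuous_subtype_val.comp continuous_snd))

theorem window_interpolateMap_apply (x : ℕ → ℝ) (m : ℕ) (s : Icc (0:ℝ) 1) :
    window m (interpolateMap x) s = x m + s * (x (m + 1) - x m) := by
  have h := interpolate_eq x (m := m) (t := m + 1 + s) (by linarith [s.2.1]) (by linarith [s.2.2])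
  simpa [window, windowEmbedding, interpolateMap] using h

theorem abs_sub_le_dist_window_interpolateMap (x y : ℕ → ℝ) (m : ℕ) :
    |x m - y m| ≤ dist (window m (interpolateMap x)) (window m (interpolateMap y)) := by
  simpa [window_interpolateMap_apply, Real.dist_eq] using
    ContinuousMap.dist_apply_le_dist (f := window m (interpolateMap x))
      (g := window m (interpolateMap y)) ⟨0, left_mem_Icc.2 zero_le_one⟩

theorem abs_add_mul_sub_le_max {a b s : ℝ} (h₀ : 0 ≤ s) (h₁ : s ≤ 1) :
    |a + s * (b - a)| ≤ max |a| |b| := by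
  have ha := abs_le.1 (le_max_left |a| |b|)
  have hb := abs_le.1 (le_max_right |a| |b|)
  rw [abs_le]
  constructor <;> nlinarith

theorem dist_window_interpolateMap_le (x y : ℕ → ℝ) (m : ℕ) :
    dist (window m (interpolateMap x)) (window m (interpolateMap y)) ≤
      max |x m - y m| |x (m + 1) - y (m + 1)| := by
  refine (ContinuousMap.dist_le (le_max_of_le_left (abs_nonneg _))).2 fun s => ?_
  rw [window_interpolateMap_apply, window_interpolateMap_apply, Real.dist_eq]
  convert abs_add_mul_sub_le_max s.2.1 s.2.2 using 2
  ring

theorem borelReducible_c0_EK :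
    BorelReducible (fun x y : ℕ → ℝ => Tendsto (fun n => |x n - y n|) atTop (𝓝 0))
      (fun f g : C(Ioi (0:ℝ), ℝ) => Tendsto (fun t => f t - g t) atTop (𝓝 0)) := by
  refine ⟨interpolateMap, continuous_interpolateMap.measurable, fun x y => ?_⟩
  beta_reduce
  rw [tendsto_sub_iff_tendsto_dist_window]
  constructor
  · intro h
    exact squeeze_zero (fun _ => dist_nonneg) (dist_window_interpolateMap_le x y)
      (by simpa using h.max (h.comp (tendsto_add_atTop_nat 1)))
  · intro h
    exact squeeze_zero (fun _ => abs_nonneg _) (abs_sub_le_dist_window_interpolateMap x y) h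

instance : MeasurableSpace C(Icc (0:ℝ) 1, ℝ) := borel _
instance : BorelSpace C(Icc (0:ℝ) 1, ℝ) := ⟨rfl⟩

theorem borelReducible_EK_tendsto_dist_window :
    BorelReducible (fun f g : C(Ioi (0:ℝ), ℝ) => Tendsto (fun t => f t - g t) atTop (𝓝 0))
      (fun u v : ℕ → C(Icc (0:ℝ) 1, ℝ) => Tendsto (fun n => dist (u n) (v n)) atTop (𝓝 0)) :=
  ⟨fun f n => window n f,
    measurable_pi_lambda _ fun _ => (ContinuousMap.continuous_precomp _).measurable,
    tendsto_sub_iff_tendsto_dist_window⟩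

theorem EK_and_E_unitInterval_bireducible_c0 :
    BorelBireducible
      (fun f g : C(Set.Ioi (0:ℝ), ℝ) => Tendsto (fun t => f t - g t) atTop (𝓝 0))
      (fun x y : ℕ → ℝ => Tendsto (fun n => |x n - y n|) atTop (𝓝 0)) ∧
    BorelBireducible
      (fun x y : ℕ → (Set.Icc (0:ℝ) 1) =>
        Tendsto (fun n => |(x n : ℝ) - (y n : ℝ)|) atTop (𝓝 0))
      (fun x y : ℕ → ℝ => Tendsto (fun n => |x n - y n|) atTop (𝓝 0)) := by
  have hIcc_c0 : BorelReducible
      (fun x y : ℕ → Icc (0:ℝ) 1 => Tendsto (fun n => |(x n : ℝ) - (y n : ℝ)|) atTop (𝓝 0))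
      (fun x y : ℕ → ℝ => Tendsto (fun n => |x n - y n|) atTop (𝓝 0)) :=
    ⟨fun x n => x n, by fun_prop, fun _ _ => Iff.rfl⟩
  have hc0_Icc := borelReducible_tendsto_dist_unitInterval ℝ
  simp only [Real.dist_eq] at hc0_Icc
  exact ⟨⟨borelReducible_EK_tendsto_dist_window.trans
      ((borelReducible_tendsto_dist_unitInterval _).trans hIcc_c0), borelReducible_c0_EK⟩,
    hIcc_c0, hc0_Icc⟩
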